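/- Let U be a nonprincipal ultrafilter on a countably infinite I, *ℤ = ∏_U ℤ. For every maximal ideal m of *ℤ, one has m = I(F(m)), i.e., m = {n ∈ *ℤ : pr(n) ∈ F(m)}, where F(m) = {pr(a) : a ∈ m}. Moreover the map m ↦ F(m) is an injection from maximal ideals of *ℤ into maximal filters on pr(*ℤ). -/

import Mathlib

/-!
Every prime of `*ℤ` is a prime element: the pointwise gcd satisfies a Bézout identity, so a
prime not dividing `x` is coprime to it. Hence `pr` turns products into unions and pointwise gcds
into intersections, and `pr n = ∅` only for units (otherwise the pointwise least prime factors of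
`n` form a prime of `*ℤ` dividing it). So for a proper ideal `m` the family `F(m)` is a filter on
`pr(*ℤ)`, and for every filter `F ⊇ F(m)` the set `I(F) = {n | pr n ∈ F}` is a proper ideal
containing `m`. For maximal `m` this forces `m = I(F)`, which gives both `m = I(F(m))` and the
maximality of `F(m)`.
-/

open Filter

/-- `p` is a prime of the ultrapower `*ℤ = ∏_U ℤ` if `p > 0`, `p ≠ 1`, and the only
divisors of `p` in `*ℤ` are `±1` and `±p`. -/
def IsNSPrime {I : Type*} {U : Ultrafilter I} (p : (↑U : Filter I).Germ ℤ) : Prop :=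
  0 < p ∧ p ≠ 1 ∧ ∀ y : (↑U : Filter I).Germ ℤ, y ∣ p → y = 1 ∨ y = -1 ∨ y = p ∨ y = -p

/-- The prime factor set `pr(n)` of `n ∈ *ℤ`: the set of primes of `*ℤ` dividing `n`. -/
def primeFactor {I : Type*} {U : Ultrafilter I} (n : (↑U : Filter I).Germ ℤ) :
    Set ((↑U : Filter I).Germ ℤ) :=
  {p | IsNSPrime p ∧ p ∣ n}

/-- A filter on the collection `pr(*ℤ)` of prime-factor sets: a family of prime-factor
sets not containing `∅`, closed under intersection, and upward closed among
prime-factor sets. -/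
def IsPrFilter {I : Type*} {U : Ultrafilter I} (F : Set (Set ((↑U : Filter I).Germ ℤ))) :
    Prop :=
  (∀ S ∈ F, ∃ n : (↑U : Filter I).Germ ℤ, S = primeFactor n) ∧
  ∅ ∉ F ∧
  (∀ S ∈ F, ∀ T ∈ F, S ∩ T ∈ F) ∧
  (∀ S ∈ F, ∀ m : (↑U : Filter I).Germ ℤ, S ⊆ primeFactor m → primeFactor m ∈ F)

open Germ

namespace Filter.Germ

variable {α β : Type*} {l : Filter α}

theorem coe_dvd_coe_iff [Monoid β] {f g : α → β} :
    (f : Germ l β) ∣ g ↔ ∀ᶠ x in l, f x ∣ g x := by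
  constructor
  · rintro ⟨c, hc⟩
    induction c using inductionOn with
    | h c => exact (coe_eq.1 hc).mono fun x hx => ⟨c x, hx⟩
  · intro h
    have : ∀ x, ∃ c, f x ∣ g x → g x = f x * c := fun x =>
      (em (f x ∣ g x)).elim (fun ⟨c, hc⟩ => ⟨c, fun _ => hc⟩) fun hx => ⟨1, fun h => absurd h hx⟩
    choose c hc using this
    exact ⟨c, coe_eq.2 (h.mono hc)⟩

theorem dvd_map₂_gcd_iff [CommMonoidWithZero β] [GCDMonoid β] {x a b : Germ l β} :
    x ∣ map₂ gcd a b ↔ x ∣ a ∧ x ∣ b :=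
  inductionOn₃ x a b fun _ _ _ => by
    simp only [map₂_coe, coe_dvd_coe_iff, ← eventually_and, dvd_gcd_iff]

theorem exists_map₂_gcd_eq_add (a b : Germ l ℤ) :
    ∃ u v : Germ l ℤ, map₂ gcd a b = u * a + v * b :=
  inductionOn₂ a b fun f g =>
    ⟨fun x => Int.gcdA (f x) (g x), fun x => Int.gcdB (f x) (g x), coe_eq.2 <|
      Eventually.of_forall fun x => by
        simp only [← Int.coe_gcd, Int.gcd_eq_gcd_ab]
        ring⟩

variable {φ : Ultrafilter α}

theorem one_le_of_pos {x : Germ (φ : Filter α) ℤ} (hx : 0 < x) : 1 ≤ x :=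
  inductionOn x (fun _ hf => coe_le.2 <| (coe_pos.1 hf).mono fun _ => id) hx

theorem isUnit_iff_eq_one_or_eq_neg_one {x : Germ (φ : Filter α) ℤ} :
    IsUnit x ↔ x = 1 ∨ x = -1 := by
  refine ⟨fun hx => ?_, by rintro (rfl | rfl) <;> simp⟩
  obtain ⟨y, hxy⟩ := hx.exists_right_inv
  have habs : |x| * |y| = 1 := by rw [← abs_mul, hxy, abs_one]
  have hx1 : 1 ≤ |x| := one_le_of_pos (abs_pos.2 (left_ne_zero_of_mul_eq_one hxy))
  have hy1 : 1 ≤ |y| := one_le_of_pos (abs_pos.2 (right_ne_zero_of_mul_eq_one hxy))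
  have : |x| = 1 := by nlinarith
  rcases (abs_eq zero_le_one).1 this with h | h <;> simp [h]

end Filter.Germ

section

variable {I : Type*} {U : Ultrafilter I}

local notation "ℤ*" => Germ (U : Filter I) ℤ

theorem IsNSPrime.not_isUnit {p : ℤ*} (hp : IsNSPrime p) : ¬IsUnit p := by
  rw [isUnit_iff_eq_one_or_eq_neg_one]
  rintro (h | h)
  · exact hp.2.1 h
  · exact absurd hp.1 (by simp [h])

theorem IsNSPrime.prime {p : ℤ*} (hp : IsNSPrime p) : Prime p := by
  refine ⟨hp.1.ne', hp.not_isUnit, fun x y hxy => ?_⟩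
  obtain ⟨hdp, hdx⟩ := dvd_map₂_gcd_iff.1 (dvd_refl (map₂ gcd p x))
  obtain ⟨u, v, huv⟩ := exists_map₂_gcd_eq_add p x
  have hcases : IsUnit (map₂ gcd p x) ∨ p ∣ map₂ gcd p x := by
    rcases hp.2.2 _ hdp with h | h | h | h <;> simp [h]
  rcases hcases with hunit | hpd
  -- A unit gcd `u p + v x` makes `p` divide `(u p + v x) y = u p y + v (x y)`.
  · refine Or.inr (hunit.dvd_mul_left.1 ?_)
    rw [huv, add_mul, mul_assoc v]
    exact dvd_add ((dvd_mul_left p u).mul_right y) (hxy.mul_left v)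
  · exact Or.inl (hpd.trans hdx)

theorem isNSPrime_coe {f : I → ℤ} (hf : ∀ᶠ i in U, Prime (f i) ∧ 0 < f i) :
    IsNSPrime (f : ℤ*) := by
  refine ⟨coe_pos.2 (hf.mono fun _ => And.right), fun h => ?_, fun y hy => ?_⟩
  · obtain ⟨i, hi, h1⟩ := (hf.and (coe_eq.1 h)).exists
    exact hi.1.ne_one h1
  · induction y using inductionOn with | _ w =>
    have hw : ∀ᶠ i in U, w i = 1 ∨ w i = -1 ∨ w i = f i ∨ w i = -f i := by
      filter_upwards [coe_dvd_coe_iff.1 hy, hf] with i hwf hfi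
      rcases (Int.prime_iff_natAbs_prime.1 hfi.1).eq_one_or_self_of_dvd _
        (Int.natAbs_dvd_natAbs.2 hwf) with h | h
      · rcases Int.natAbs_eq_iff.1 h with h | h <;> simp [h]
      · rcases Int.natAbs_eq_natAbs_iff.1 h with h | h <;> simp [h]
    simpa only [← coe_one, ← coe_neg, coe_eq, EventuallyEq, Pi.one_apply, Pi.neg_apply,
      Ultrafilter.eventually_or] using hw

theorem primeFactor_subset_of_dvd {a b : ℤ*} (h : a ∣ b) : primeFactor a ⊆ primeFactor b :=
  fun _ ⟨hp, hpa⟩ => ⟨hp, hpa.trans h⟩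

theorem primeFactor_inter_subset_add (a b : ℤ*) :
    primeFactor a ∩ primeFactor b ⊆ primeFactor (a + b) :=
  fun _ ⟨⟨hp, hpa⟩, _, hpb⟩ => ⟨hp, dvd_add hpa hpb⟩

theorem primeFactor_mul (a b : ℤ*) : primeFactor (a * b) = primeFactor a ∪ primeFactor b := by
  ext p
  simp only [primeFactor, Set.mem_ofPred_eq, Set.mem_union, ← and_or_left]
  exact and_congr_right fun hp => hp.prime.dvd_mul

theorem primeFactor_map₂_gcd (a b : ℤ*) :
    primeFactor (map₂ gcd a b) = primeFactor a ∩ primeFactor b := by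
  ext p
  simp only [primeFactor, Set.mem_ofPred_eq, Set.mem_inter_iff, dvd_map₂_gcd_iff]
  tauto

theorem primeFactor_one : primeFactor (1 : ℤ*) = ∅ :=
  Set.eq_empty_of_forall_notMem fun _ ⟨hp, h⟩ => hp.not_isUnit (isUnit_of_dvd_one h)

theorem isUnit_of_primeFactor_eq_empty {a : ℤ*} (h : primeFactor a = ∅) : IsUnit a := by
  induction a using inductionOn with | _ f =>
  rcases U.em fun i => IsUnit (f i) with hu | hu
  · exact IsUnit.of_mul_eq_one (f : ℤ*) (coe_eq.2 (hu.mono fun _ => Int.isUnit_mul_self))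
  -- Otherwise the pointwise least prime factors of `|f|` form a prime of `*ℤ` dividing `f`.
  have hq : ∀ᶠ i in U, Prime ((f i).natAbs.minFac : ℤ) ∧ 0 < ((f i).natAbs.minFac : ℤ) ∧
      ((f i).natAbs.minFac : ℤ) ∣ f i := by
    filter_upwards [hu] with i hi
    have hmin := Nat.minFac_prime (mt Int.isUnit_iff_natAbs_eq.2 hi)
    exact ⟨Nat.prime_iff_prime_int.1 hmin, by exact_mod_cast hmin.pos,
      Int.ofNat_dvd_left.2 (Nat.minFac_dvd _)⟩
  have hmem : ((fun i => ((f i).natAbs.minFac : ℤ) : I → ℤ) : ℤ*) ∈ primeFactor (f : ℤ*) :=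
    ⟨isNSPrime_coe (hq.mono fun _ h => ⟨h.1, h.2.1⟩),
      coe_dvd_coe_iff.2 (hq.mono fun _ h => h.2.2)⟩
  exact absurd (h ▸ hmem) (Set.notMem_empty _)

theorem isPrFilter_primeFactor_image {m : Ideal ℤ*} (hm : m ≠ ⊤) :
    IsPrFilter (primeFactor '' (m : Set ℤ*)) := by
  refine ⟨?_, ?_, ?_, ?_⟩
  · rintro _ ⟨a, -, rfl⟩
    exact ⟨a, rfl⟩
  · rintro ⟨a, ha, h⟩
    exact hm (m.eq_top_of_isUnit_mem ha (isUnit_of_primeFactor_eq_empty h))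
  · rintro _ ⟨a, ha, rfl⟩ _ ⟨b, hb, rfl⟩
    obtain ⟨u, v, huv⟩ := exists_map₂_gcd_eq_add a b
    exact ⟨map₂ gcd a b, huv ▸ m.add_mem (m.mul_mem_left u ha) (m.mul_mem_left v hb),
      primeFactor_map₂_gcd a b⟩
  · rintro _ ⟨a, ha, rfl⟩ c hac
    exact ⟨a * c, m.mul_mem_right c ha, by rw [primeFactor_mul, Set.union_eq_right.2 hac]⟩

variable {F : Set (Set (Germ (U : Filter I) ℤ))}

/-- The ideal `I(F) = {n | pr n ∈ F}`. -/
def IsPrFilter.ideal (hF : IsPrFilter F) (h0 : primeFactor 0 ∈ F) : Ideal ℤ* where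
  carrier := {n | primeFactor n ∈ F}
  zero_mem' := h0
  add_mem' ha hb := hF.2.2.2 _ (hF.2.2.1 _ ha _ hb) _ (primeFactor_inter_subset_add _ _)
  smul_mem' c _ ha := hF.2.2.2 _ ha _ (primeFactor_subset_of_dvd (dvd_mul_left _ c))

theorem IsPrFilter.ideal_ne_top (hF : IsPrFilter F) (h0 : primeFactor 0 ∈ F) :
    hF.ideal h0 ≠ ⊤ := fun h =>
  hF.2.1 (primeFactor_one ▸ (h ▸ Submodule.mem_top : (1 : ℤ*) ∈ hF.ideal h0))

theorem Ideal.IsMaximal.coe_eq_setOf_primeFactor_mem {m : Ideal ℤ*} (hm : m.IsMaximal)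
    (hF : IsPrFilter F) (hmF : primeFactor '' (m : Set ℤ*) ⊆ F) :
    (m : Set ℤ*) = {n | primeFactor n ∈ F} :=
  congrArg SetLike.coe <| hm.eq_of_le (hF.ideal_ne_top (hmF ⟨0, m.zero_mem, rfl⟩))
    fun a ha => hmF ⟨a, ha, rfl⟩

theorem Ideal.IsMaximal.eq_primeFactor_image_of_subset {m : Ideal ℤ*} (hm : m.IsMaximal)
    (hF : IsPrFilter F) (hmF : primeFactor '' (m : Set ℤ*) ⊆ F) :
    F = primeFactor '' (m : Set ℤ*) := by
  refine hmF.antisymm' fun S hS => ?_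
  obtain ⟨n, rfl⟩ := hF.1 S hS
  exact ⟨n, (hm.coe_eq_setOf_primeFactor_mem hF hmF).symm ▸ hS, rfl⟩

end

theorem maximal_ideal_eq_ideal_of_filter_general {I : Type*} (U : Ultrafilter I) :
    (∀ m : Ideal ((↑U : Filter I).Germ ℤ), m.IsMaximal →
      (m : Set ((↑U : Filter I).Germ ℤ)) =
        {n | primeFactor n ∈ primeFactor '' (m : Set ((↑U : Filter I).Germ ℤ))}) ∧
    (∀ m : Ideal ((↑U : Filter I).Germ ℤ), m.IsMaximal →
      IsPrFilter (primeFactor '' (m : Set ((↑U : Filter I).Germ ℤ))) ∧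
      ∀ F' : Set (Set ((↑U : Filter I).Germ ℤ)), IsPrFilter F' →
        primeFactor '' (m : Set ((↑U : Filter I).Germ ℤ)) ⊆ F' →
        F' = primeFactor '' (m : Set ((↑U : Filter I).Germ ℤ))) ∧
    (∀ m₁ m₂ : Ideal ((↑U : Filter I).Germ ℤ), m₁.IsMaximal → m₂.IsMaximal →
      primeFactor '' (m₁ : Set ((↑U : Filter I).Germ ℤ)) =
        primeFactor '' (m₂ : Set ((↑U : Filter I).Germ ℤ)) → m₁ = m₂) := by
  have ideal_eq : ∀ m : Ideal ((↑U : Filter I).Germ ℤ), m.IsMaximal →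
      (m : Set ((↑U : Filter I).Germ ℤ)) =
        {n | primeFactor n ∈ primeFactor '' (m : Set ((↑U : Filter I).Germ ℤ))} :=
    fun m hm => hm.coe_eq_setOf_primeFactor_mem (isPrFilter_primeFactor_image hm.ne_top)
      subset_rfl
  refine ⟨ideal_eq, fun m hm => ⟨isPrFilter_primeFactor_image hm.ne_top,
    fun _ hF hmF => hm.eq_primeFactor_image_of_subset hF hmF⟩, ?_⟩
  intro m₁ m₂ hm₁ hm₂ h
  exact SetLike.coe_injective (by rw [ideal_eq m₁ hm₁, ideal_eq m₂ hm₂, h])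

/-- For every maximal ideal `m` of `*ℤ` one has `m = I(F(m))`, i.e.
`m = {n : pr(n) ∈ F(m)}` where `F(m) = {pr(a) : a ∈ m}`; moreover `m ↦ F(m)` is an
injection from maximal ideals of `*ℤ` into maximal filters on `pr(*ℤ)`. -/
theorem maximal_ideal_eq_ideal_of_filter {I : Type*} [Countable I] [Infinite I]
    (U : Ultrafilter I) (hU : ∀ i : I, U ≠ pure i) :
    (∀ m : Ideal ((↑U : Filter I).Germ ℤ), m.IsMaximal →
      (m : Set ((↑U : Filter I).Germ ℤ)) =
        {n | primeFactor n ∈ primeFactor '' (m : Set ((↑U : Filter I).Germ ℤ))}) ∧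
    (∀ m : Ideal ((↑U : Filter I).Germ ℤ), m.IsMaximal →
      IsPrFilter (primeFactor '' (m : Set ((↑U : Filter I).Germ ℤ))) ∧
      ∀ F' : Set (Set ((↑U : Filter I).Germ ℤ)), IsPrFilter F' →
        primeFactor '' (m : Set ((↑U : Filter I).Germ ℤ)) ⊆ F' →
        F' = primeFactor '' (m : Set ((↑U : Filter I).Germ ℤ))) ∧
    (∀ m₁ m₂ : Ideal ((↑U : Filter I).Germ ℤ), m₁.IsMaximal → m₂.IsMaximal →
      primeFactor '' (m₁ : Set ((↑U : Filter I).Germ ℤ)) =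
        primeFactor '' (m₂ : Set ((↑U : Filter I).Germ ℤ)) → m₁ = m₂) :=
  maximal_ideal_eq_ideal_of_filter_general U
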